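/- Let b₃ > 0, κ > 0, and let u_min < 0 < u_max be constants. Suppose u* ∈ [u_min, u_max], λ* ∈ ∂|·|(u*) (i.e., λ* = sign(u*) if u* ≠ 0 and λ* ∈ [−1,1] if u* = 0), ω ∈ ℝ, and u* = max{u_min, min{u_max, −(ω + κλ*)/b₃}}. Then u* = 0 if and only if |ω| ≤ κ. -/

import Mathlib

/-- Pointwise sparsity: with `b₃ > 0`, `κ > 0`, `u_min < 0 < u_max`,
`u* ∈ [u_min, u_max]`, `λ* ∈ ∂|·|(u*)`, and the projection formula
`u* = max{u_min, min{u_max, −(ω + κλ*)/b₃}}`, one has `u* = 0 ↔ |ω| ≤ κ`. -/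
theorem sparsity_pointwise (b₃ κ umin umax ustar lamstar ω : ℝ)
    (hb₃ : 0 < b₃) (hκ : 0 < κ) (humin : umin < 0) (humax : 0 < umax)
    (hstar : ustar ∈ Set.Icc umin umax)
    (hpos : 0 < ustar → lamstar = 1)
    (hzero : ustar = 0 → lamstar ∈ Set.Icc (-1 : ℝ) 1)
    (hneg : ustar < 0 → lamstar = -1)
    (hproj : ustar = max umin (min umax (-(ω + κ * lamstar) / b₃))) :
    ustar = 0 ↔ |ω| ≤ κ := by
  set v : ℝ := -(ω + κ * lamstar) / b₃ with hv
  constructor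
  · intro h0
    have hlam := hzero h0
    rw [h0] at hproj
    have h1 : min umax v = 0 := by
      rcases le_or_gt (min umax v) 0 with h | h
      · have := max_le humin.le h
        have h2 : max umin (min umax v) ≤ 0 := this
        rcases max_cases umin (min umax v) with ⟨he, _⟩ | ⟨he, _⟩ <;> linarith [hproj]
      · have := le_max_right umin (min umax v)
        linarith [hproj]
    have h2 : v = 0 := by
      rcases min_cases umax v with ⟨he, hle⟩ | ⟨he, _⟩ <;> [linarith; linarith]
    have h3 : ω + κ * lamstar = 0 := by
      rw [hv, div_eq_zero_iff] at h2; rcases h2 with h2 | h2 <;> linarith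
    have := hlam.1; have := hlam.2
    rw [abs_le]
    constructor <;> nlinarith
  · intro hω
    rcases abs_le.mp hω with ⟨hω1, hω2⟩
    by_contra hne
    rcases lt_or_gt_of_ne hne with hlt | hgt
    · have hl := hneg hlt
      have hv0 : 0 ≤ v := by
        rw [hv, hl]
        apply div_nonneg _ hb₃.le
        linarith
      have : 0 ≤ min umax v := le_min humax.le hv0
      have := le_max_right umin (min umax v)
      linarith [hproj]
    · have hl := hpos hgt
      have hv0 : v ≤ 0 := by
        rw [hv, hl]
        apply div_nonpos_of_nonpos_of_nonneg _ hb₃.le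
        linarith
      have h1 : min umax v ≤ 0 := le_trans (min_le_right _ _) hv0
      have h2 : max umin (min umax v) ≤ 0 := max_le humin.le h1
      linarith [hproj]
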